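/- arXiv:1902.07689 — 2 statements merged into one kernel-verified Lean document; each statement's English description precedes it below -/
import Mathlib

section
/- Let 𝓛 be a continuous nest on a complex separable Hilbert space H, let T be a finite rank bounded operator on H, let M₀ ∈ 𝓛, and let P ∈ 𝓛 be such that φ_T(M₀) ⊊ P and P ⊆ φ_T(M) for every M ∈ 𝓛 with φ_T(M₀) ⊊ φ_T(M). Then there exists x ∈ H such that M̂_x = φ_T(M₀), M_x = P and M_{Tx} = σ_T(Ψ_T(M₀)). -/
open scoped InnerProductSpace

variable {H : Type*} [NormedAddCommGroup H] [InnerProductSpace ℂ H]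
  [CompleteSpace H] [TopologicalSpace.SeparableSpace H]

/-- A subspace lattice on `H`: a set of closed subspaces containing `⊥` and `⊤`,
closed under arbitrary intersections and closed linear spans. -/
def IsSubspaceLattice (𝓛 : Set (Submodule ℂ H)) : Prop :=
  (∀ M ∈ 𝓛, IsClosed (M : Set H)) ∧ ⊥ ∈ 𝓛 ∧ ⊤ ∈ 𝓛 ∧
  (∀ S ⊆ 𝓛, sInf S ∈ 𝓛) ∧ (∀ S ⊆ 𝓛, (sSup S).topologicalClosure ∈ 𝓛)

/-- A nest: a totally ordered subspace lattice. -/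
def IsNest (𝓛 : Set (Submodule ℂ H)) : Prop :=
  IsSubspaceLattice 𝓛 ∧ ∀ M ∈ 𝓛, ∀ N ∈ 𝓛, M ≤ N ∨ N ≤ M

/-- A continuous nest. -/
def IsContinuousNest (𝓛 : Set (Submodule ℂ H)) : Prop :=
  IsNest 𝓛 ∧ ∀ M ∈ 𝓛, M = (sSup {N ∈ 𝓛 | N < M}).topologicalClosure

/-- `M_x`: the intersection of all members of `𝓛` containing `x`. -/
noncomputable def Mx (𝓛 : Set (Submodule ℂ H)) (x : H) : Submodule ℂ H :=
  sInf {M ∈ 𝓛 | x ∈ M}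

/-- `M̂_x`: the closed span of all members of `𝓛` orthogonal to `x`. -/
noncomputable def Mhat (𝓛 : Set (Submodule ℂ H)) (x : H) : Submodule ℂ H :=
  (sSup {M ∈ 𝓛 | ∀ v ∈ M, inner ℂ x v = (0 : ℂ)}).topologicalClosure

/-- `φ_T(M)`: the closed span of all members `M'` of `𝓛` with `T(M') ⊆ M`. -/
noncomputable def phiT (𝓛 : Set (Submodule ℂ H)) (T : H →L[ℂ] H) (M : Submodule ℂ H) :
    Submodule ℂ H :=
  (sSup {M' ∈ 𝓛 | ∀ v ∈ M', T v ∈ M}).topologicalClosure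

/-- `Ψ_T(M)`: the intersection of all `M' ∈ 𝓛` with `φ_T(M') = φ_T(M)`. -/
noncomputable def PsiT (𝓛 : Set (Submodule ℂ H)) (T : H →L[ℂ] H) (M : Submodule ℂ H) :
    Submodule ℂ H :=
  sInf {M' ∈ 𝓛 | phiT 𝓛 T M' = phiT 𝓛 T M}

/-- `σ_T(M)`: the closed span of all `M' ∈ 𝓛` with `φ_T(M') = φ_T(M)`. -/
noncomputable def sigmaT (𝓛 : Set (Submodule ℂ H)) (T : H →L[ℂ] H) (M : Submodule ℂ H) :
    Submodule ℂ H :=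
  (sSup {M' ∈ 𝓛 | phiT 𝓛 T M' = phiT 𝓛 T M}).topologicalClosure

/-- The kernel map `ω_T`. -/
noncomputable def omegaT (𝓛 : Set (Submodule ℂ H)) (T : H →L[ℂ] H) (M : Submodule ℂ H) :
    Submodule ℂ H × Submodule ℂ H :=
  (phiT 𝓛 T M, PsiT 𝓛 T M)

/-- The rank-one operator `x ⊗ y : z ↦ ⟨z, y⟩ x`. -/
noncomputable def rankOne (x y : H) : H →L[ℂ] H :=
  (innerSL ℂ y).smulRight x

/-- The nest algebra of a subspace lattice. -/
def nestAlg (𝓛 : Set (Submodule ℂ H)) : Set (H →L[ℂ] H) :=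
  {T | ∀ M ∈ 𝓛, ∀ v ∈ M, T v ∈ M}

/-- Lie module over the nest algebra. -/
def IsLieModule (𝓛 : Set (Submodule ℂ H)) (𝓜 : Submodule ℂ (H →L[ℂ] H)) : Prop :=
  ∀ A ∈ 𝓜, ∀ T ∈ nestAlg 𝓛, A.comp T - T.comp A ∈ 𝓜

/-- Orthogonal projection of a vector onto a closed subspace (junk value `0` if not closed). -/
noncomputable def projVec (N : Submodule ℂ H) (z : H) : H := by
  classical
  exact if h : IsClosed (N : Set H) then
    have : CompleteSpace N := h.completeSpace_coe
    (N.orthogonalProjectionOnto z : H)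
  else 0

/-!
Write `N = φ_T(M₀)` and `σ = σ_T(M₀)`; since `φ_T(Ψ_T(M₀)) = N`, also `σ = σ_T(Ψ_T(M₀))`.
By continuity of the nest, `σ` is the meet of the members strictly above it; each of those has
`φ_T` strictly above `N`, hence contains `T(P)` by the minimality of `P`, so `T(P) ⊆ σ`.

A vector `x` of `E = Nᗮ ⊓ P` therefore has the three properties as soon as it avoids every member
of `𝓛` strictly below `P`, the orthocomplement of every member strictly above `N`, and `T⁻¹(C)`
for every member `C` strictly below `σ`. None of these closed subspaces contains `E`, and
separability plus continuity of the nest reduce each family to a countable cofinal subfamily, so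
Baire's theorem in `E` produces `x`.
-/

open Submodule

theorem exists_countable_subset_biUnion_subset_closure {X ι : Type*} [TopologicalSpace X]
    [TopologicalSpace.PseudoMetrizableSpace X] [TopologicalSpace.SeparableSpace X]
    (f : ι → Set X) (S : Set ι) :
    ∃ S' ⊆ S, S'.Countable ∧ ⋃ i ∈ S, f i ⊆ closure (⋃ i ∈ S', f i) := by
  obtain ⟨t, hts, htc, hdense⟩ :=
    (TopologicalSpace.IsSeparable.of_separableSpace (⋃ i ∈ S, f i)).exists_countable_dense_subset
  choose g hgS hg using fun y : t => Set.mem_iUnion₂.mp (hts y.2)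
  have := htc.to_subtype
  refine ⟨Set.range g, Set.range_subset_iff.mpr hgS, Set.countable_range g,
    hdense.trans (closure_mono ?_)⟩
  exact fun y hy => Set.mem_biUnion (Set.mem_range_self ⟨y, hy⟩) (hg ⟨y, hy⟩)

theorem Submodule.exists_forall_notMem_of_countable {𝕜 V : Type*} [NontriviallyNormedField 𝕜]
    [AddCommGroup V] [TopologicalSpace V] [BaireSpace V] [ContinuousAdd V] [Module 𝕜 V]
    [ContinuousSMul 𝕜 V] {S : Set (Submodule 𝕜 V)} (hS : S.Countable)
    (hclosed : ∀ F ∈ S, IsClosed (F : Set V)) (hne : ∀ F ∈ S, F ≠ ⊤) :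
    ∃ x, ∀ F ∈ S, x ∉ F := by
  have hdense : Dense (⋂ F ∈ S, (F : Set V)ᶜ) := by
    refine dense_biInter_of_isOpen (fun F hF => (hclosed F hF).isOpen_compl) hS fun F hF => ?_
    rw [← interior_eq_empty_iff_dense_compl, ← Set.not_nonempty_iff_eq_empty]
    exact fun hint => hne F hF (F.eq_top_of_nonempty_interior' hint)
  obtain ⟨x, hx⟩ := hdense.nonempty
  exact ⟨x, Set.mem_iInter₂.mp hx⟩

theorem Submodule.exists_mem_forall_notMem_of_countable {𝕜 V : Type*} [NontriviallyNormedField 𝕜]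
    [NormedAddCommGroup V] [NormedSpace 𝕜 V] [CompleteSpace V] {E : Submodule 𝕜 V}
    (hE : IsClosed (E : Set V)) {S : Set (Submodule 𝕜 V)} (hS : S.Countable)
    (hclosed : ∀ F ∈ S, IsClosed (F : Set V)) (hne : ∀ F ∈ S, ¬ E ≤ F) :
    ∃ x ∈ E, ∀ F ∈ S, x ∉ F := by
  have := hE.completeSpace_coe
  obtain ⟨x, hx⟩ := exists_forall_notMem_of_countable (S := comap E.subtype '' S) (hS.image _)
    (by rintro _ ⟨F, hF, rfl⟩; exact (hclosed F hF).preimage continuous_subtype_val)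
    (by rintro _ ⟨F, hF, rfl⟩; exact (hne F hF).comp comap_subtype_eq_top.mp)
  exact ⟨x, x.2, fun F hF => hx _ ⟨F, hF, rfl⟩⟩

theorem Submodule.orthogonal_inf_ne_bot_of_lt {𝕜 V : Type*} [RCLike 𝕜] [NormedAddCommGroup V]
    [InnerProductSpace 𝕜 V] {K₁ K₂ : Submodule 𝕜 V} [K₁.HasOrthogonalProjection] (h : K₁ < K₂) :
    K₁ᗮ ⊓ K₂ ≠ ⊥ := fun hbot =>
  h.ne (by simpa [hbot] using sup_orthogonal_inf_of_hasOrthogonalProjection h.le)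

section Nest

variable {V : Type*} [NormedAddCommGroup V] [InnerProductSpace ℂ V]
  {𝓛 : Set (Submodule ℂ V)} {T : V →L[ℂ] V} {C M M₀ N P Q : Submodule ℂ V}

theorem IsSubspaceLattice.phiT_mem (h : IsSubspaceLattice 𝓛) (T : V →L[ℂ] V)
    (M : Submodule ℂ V) : phiT 𝓛 T M ∈ 𝓛 :=
  h.2.2.2.2 _ fun _ hM => hM.1

theorem IsSubspaceLattice.sigmaT_mem (h : IsSubspaceLattice 𝓛) (T : V →L[ℂ] V)
    (M : Submodule ℂ V) : sigmaT 𝓛 T M ∈ 𝓛 :=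
  h.2.2.2.2 _ fun _ hM => hM.1

theorem IsNest.isClosed (h : IsNest 𝓛) (hM : M ∈ 𝓛) : IsClosed (M : Set V) :=
  h.1.1 M hM

theorem IsNest.lt_of_not_le (h : IsNest 𝓛) (hM : M ∈ 𝓛) (hN : N ∈ 𝓛) (hMN : ¬ M ≤ N) :
    N < M :=
  ((h.2 M hM N hN).resolve_left hMN).lt_of_not_ge hMN

theorem phiT_le_comap (hM : IsClosed (M : Set V)) : phiT 𝓛 T M ≤ M.comap (T : V →ₗ[ℂ] V) :=
  topologicalClosure_minimal _ (sSup_le fun _ hM' v hv => hM'.2 v hv) (hM.preimage T.continuous)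

theorem le_phiT {W : Submodule ℂ V} (hW : W ∈ 𝓛) (hWM : W ≤ M.comap (T : V →ₗ[ℂ] V)) :
    W ≤ phiT 𝓛 T M :=
  (le_topologicalClosure _).trans' (le_sSup ⟨hW, hWM⟩)

theorem phiT_mono (hMN : M ≤ N) : phiT 𝓛 T M ≤ phiT 𝓛 T N :=
  topologicalClosure_mono (sSup_le_sSup fun _ hW => ⟨hW.1, fun v hv => hMN (hW.2 v hv)⟩)

theorem le_sigmaT (hM : M ∈ 𝓛) (hMM₀ : phiT 𝓛 T M = phiT 𝓛 T M₀) : M ≤ sigmaT 𝓛 T M₀ :=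
  (le_topologicalClosure _).trans' (le_sSup ⟨hM, hMM₀⟩)

theorem phiT_PsiT (h : IsSubspaceLattice 𝓛) (hM : M ∈ 𝓛) :
    phiT 𝓛 T (PsiT 𝓛 T M) = phiT 𝓛 T M := by
  refine le_antisymm (phiT_mono (sInf_le ⟨hM, rfl⟩)) (le_phiT (h.phiT_mem T M) ?_)
  rw [PsiT, ← map_le_iff_le_comap]
  refine le_sInf fun M' hM' => map_le_iff_le_comap.mpr ?_
  rw [← hM'.2]
  exact phiT_le_comap (h.1 M' hM'.1)

theorem sigmaT_PsiT (h : IsSubspaceLattice 𝓛) (hM : M ∈ 𝓛) :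
    sigmaT 𝓛 T (PsiT 𝓛 T M) = sigmaT 𝓛 T M := by
  unfold sigmaT
  rw [phiT_PsiT h hM]

theorem IsNest.Mx_eq (h : IsNest 𝓛) {x : V} (hQ : Q ∈ 𝓛) (hx : x ∈ Q)
    (hlt : ∀ M ∈ 𝓛, M < Q → x ∉ M) : Mx 𝓛 x = Q :=
  le_antisymm (sInf_le ⟨hQ, hx⟩) (le_sInf fun M hM =>
    by_contra fun hQM => hlt M hM.1 (h.lt_of_not_le hQ hM.1 hQM) hM.2)

theorem IsNest.Mhat_eq (h : IsNest 𝓛) {x : V} (hN : N ∈ 𝓛) (hx : x ∈ Nᗮ)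
    (hgt : ∀ M ∈ 𝓛, N < M → x ∉ Mᗮ) : Mhat 𝓛 x = N := by
  refine le_antisymm
    (topologicalClosure_minimal _ (sSup_le fun M hM => ?_) (h.isClosed hN)) ?_
  · by_contra hMN
    exact hgt M hM.1 (h.lt_of_not_le hM.1 hN hMN) ((mem_orthogonal' M x).mpr hM.2)
  · exact (le_topologicalClosure _).trans'
      (le_sSup ⟨hN, fun v hv => inner_eq_zero_symm.mp (hx v hv)⟩)

theorem IsContinuousNest.sInf_gt_eq (h : IsContinuousNest 𝓛) (hQ : Q ∈ 𝓛) :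
    sInf {M ∈ 𝓛 | Q < M} = Q := by
  set L := sInf {M ∈ 𝓛 | Q < M}
  have hL : L ∈ 𝓛 := h.1.1.2.2.2.1 _ fun _ hM => hM.1
  refine le_antisymm ?_ (le_sInf fun M hM => hM.2.le)
  calc L = (sSup {N ∈ 𝓛 | N < L}).topologicalClosure := h.2 L hL
    _ ≤ Q := topologicalClosure_minimal _ (sSup_le fun N hN => by_contra fun hNQ =>
        hN.2.not_ge (sInf_le ⟨hN.1, h.1.lt_of_not_le hN.1 hQ hNQ⟩)) (h.1.isClosed hQ)

theorem IsContinuousNest.exists_countable_cofinal_lt [TopologicalSpace.SeparableSpace V]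
    (h : IsContinuousNest 𝓛) (hQ : Q ∈ 𝓛) :
    ∃ S ⊆ {M ∈ 𝓛 | M < Q}, S.Countable ∧ ∀ M ∈ 𝓛, M < Q → ∃ N ∈ S, M ≤ N := by
  obtain ⟨S, hS, hSc, hdense⟩ :=
    exists_countable_subset_biUnion_subset_closure (SetLike.coe : Submodule ℂ V → Set V)
      {M ∈ 𝓛 | M < Q}
  refine ⟨S, hS, hSc, fun M hM hMQ => ?_⟩
  by_contra! hnot
  have hSM : ⋃ N ∈ S, (N : Set V) ⊆ M := Set.iUnion₂_subset fun N hN =>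
    (h.1.lt_of_not_le hM (hS hN).1 (hnot N hN)).le
  refine hMQ.not_ge ?_
  calc Q = (sSup {N ∈ 𝓛 | N < Q}).topologicalClosure := h.2 Q hQ
    _ ≤ M := topologicalClosure_minimal _ (sSup_le fun N hN v hv =>
        closure_minimal hSM (h.1.isClosed hM) (hdense (Set.mem_biUnion hN hv)))
      (h.1.isClosed hM)

theorem IsContinuousNest.exists_countable_coinitial_gt [CompleteSpace V]
    [TopologicalSpace.SeparableSpace V] (h : IsContinuousNest 𝓛) (hN : N ∈ 𝓛) :
    ∃ S ⊆ {M ∈ 𝓛 | N < M}, S.Countable ∧ ∀ M ∈ 𝓛, N < M → ∃ A ∈ S, A ≤ M := by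
  obtain ⟨S, hS, hSc, hdense⟩ :=
    exists_countable_subset_biUnion_subset_closure (fun A : Submodule ℂ V => (Aᗮ : Set V))
      {M ∈ 𝓛 | N < M}
  refine ⟨S, hS, hSc, fun M hM hNM => ?_⟩
  by_contra! hnot
  have hSM : ⋃ A ∈ S, (Aᗮ : Set V) ⊆ Mᗮ := Set.iUnion₂_subset fun A hA =>
    orthogonal_le (h.1.lt_of_not_le (hS hA).1 hM (hnot A hA)).le
  have hM_le : ∀ A ∈ {M ∈ 𝓛 | N < M}, M ≤ A := fun A hA => by
    have := (h.1.isClosed hA.1).completeSpace_coe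
    have hAM : Aᗮ ≤ Mᗮ := fun v hv =>
      closure_minimal hSM (isClosed_orthogonal M) (hdense (Set.mem_biUnion hA hv))
    simpa using (le_orthogonal_orthogonal M).trans (orthogonal_le hAM)
  exact hNM.not_ge (h.sInf_gt_eq hN ▸ le_sInf hM_le)

theorem le_comap_sigmaT (h : IsContinuousNest 𝓛) (hM₀ : M₀ ∈ 𝓛)
    (hmin : ∀ M ∈ 𝓛, phiT 𝓛 T M₀ < phiT 𝓛 T M → P ≤ phiT 𝓛 T M) :
    P ≤ (sigmaT 𝓛 T M₀).comap (T : V →ₗ[ℂ] V) := by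
  rw [← map_le_iff_le_comap, ← h.sInf_gt_eq (h.1.1.sigmaT_mem T M₀)]
  refine le_sInf fun M hM => map_le_iff_le_comap.mpr ?_
  have hlevel : phiT 𝓛 T M₀ < phiT 𝓛 T M :=
    (phiT_mono ((le_sigmaT hM₀ rfl).trans hM.2.le)).lt_of_ne fun heq =>
      hM.2.not_ge (le_sigmaT hM.1 heq.symm)
  exact (hmin M hM.1 hlevel).trans (phiT_le_comap (h.1.isClosed hM.1))

theorem IsNest.not_orthogonal_inf_le_of_lt [CompleteSpace V] (h : IsNest 𝓛) (hN : N ∈ 𝓛)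
    (hNP : N < P) (hM : M ∈ 𝓛) (hMP : M < P) : ¬ Nᗮ ⊓ P ≤ M := by
  have := (h.isClosed hN).completeSpace_coe
  intro hE
  rcases h.2 N hN M hM with hNM | hMN
  · exact hMP.not_ge ((sup_orthogonal_inf_of_hasOrthogonalProjection hNP.le).ge.trans
      (sup_le hNM hE))
  · exact orthogonal_inf_ne_bot_of_lt hNP
      (eq_bot_iff.mpr ((le_inf (hE.trans hMN) inf_le_left).trans (inf_orthogonal_eq_bot N).le))

theorem IsNest.not_orthogonal_inf_le_orthogonal [CompleteSpace V] (h : IsNest 𝓛) (hN : N ∈ 𝓛)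
    (hP : P ∈ 𝓛) (hNP : N < P) (hM : M ∈ 𝓛) (hNM : N < M) : ¬ Nᗮ ⊓ P ≤ Mᗮ := by
  have := (h.isClosed hN).completeSpace_coe
  intro hE
  have hNK : N < M ⊓ P := by
    rcases h.2 M hM P hP with hMP | hPM
    · rwa [inf_eq_left.mpr hMP]
    · rwa [inf_eq_right.mpr hPM]
  refine orthogonal_inf_ne_bot_of_lt hNK (eq_bot_iff.mpr ?_)
  calc Nᗮ ⊓ (M ⊓ P) ≤ M ⊓ Mᗮ :=
        le_inf (inf_le_right.trans inf_le_left) ((inf_le_inf_left _ inf_le_right).trans hE)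
    _ = ⊥ := inf_orthogonal_eq_bot M

theorem IsNest.not_orthogonal_inf_le_comap_of_lt_sigmaT [CompleteSpace V] (h : IsNest 𝓛)
    (hP : P ∈ 𝓛) (hlt : phiT 𝓛 T M₀ < P) (hC : C ∈ 𝓛) (hCσ : C < sigmaT 𝓛 T M₀) :
    ¬ (phiT 𝓛 T M₀)ᗮ ⊓ P ≤ C.comap (T : V →ₗ[ℂ] V) := by
  have := (h.isClosed (h.1.phiT_mem T M₀)).completeSpace_coe
  intro hE
  obtain ⟨M, hM, hMC⟩ : ∃ M ∈ {M ∈ 𝓛 | phiT 𝓛 T M = phiT 𝓛 T M₀}, ¬ M ≤ C := by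
    by_contra! hall
    exact hCσ.not_ge (topologicalClosure_minimal _ (sSup_le hall) (h.isClosed hC))
  have hPM : P ≤ M.comap (T : V →ₗ[ℂ] V) := by
    rw [← sup_orthogonal_inf_of_hasOrthogonalProjection hlt.le]
    refine sup_le ?_ (hE.trans (comap_mono (h.lt_of_not_le hM.1 hC hMC).le))
    rw [← hM.2]
    exact phiT_le_comap (h.isClosed hM.1)
  exact hlt.not_ge (hM.2 ▸ le_phiT hP hPM)

theorem IsContinuousNest.exists_generic_mem_orthogonal_inf [CompleteSpace V]
    [TopologicalSpace.SeparableSpace V] (h : IsContinuousNest 𝓛) (hN : N ∈ 𝓛) (hP : P ∈ 𝓛)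
    (hQ : Q ∈ 𝓛) (hNP : N < P) (hTQ : ∀ C ∈ 𝓛, C < Q → ¬ Nᗮ ⊓ P ≤ C.comap (T : V →ₗ[ℂ] V)) :
    ∃ x ∈ Nᗮ ⊓ P, (∀ M ∈ 𝓛, N < M → x ∉ Mᗮ) ∧ (∀ M ∈ 𝓛, M < P → x ∉ M) ∧
      ∀ C ∈ 𝓛, C < Q → T x ∉ C := by
  obtain ⟨SA, hSA, hSAc, hAcof⟩ := h.exists_countable_coinitial_gt hN
  obtain ⟨SB, hSB, hSBc, hBcof⟩ := h.exists_countable_cofinal_lt hP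
  obtain ⟨SC, hSC, hSCc, hCcof⟩ := h.exists_countable_cofinal_lt hQ
  set bad := (fun A : Submodule ℂ V => Aᗮ) '' SA ∪ SB ∪ comap (T : V →ₗ[ℂ] V) '' SC
  have hbad : ∀ F ∈ bad, IsClosed (F : Set V) ∧ ¬ Nᗮ ⊓ P ≤ F := by
    rintro F ((⟨A, hA, rfl⟩ | hF) | ⟨C, hC, rfl⟩)
    · exact ⟨isClosed_orthogonal A,
        h.1.not_orthogonal_inf_le_orthogonal hN hP hNP (hSA hA).1 (hSA hA).2⟩
    · exact ⟨h.1.isClosed (hSB hF).1,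
        h.1.not_orthogonal_inf_le_of_lt hN hNP (hSB hF).1 (hSB hF).2⟩
    · exact ⟨(h.1.isClosed (hSC hC).1).preimage T.continuous, hTQ C (hSC hC).1 (hSC hC).2⟩
  obtain ⟨x, hxE, hx⟩ := exists_mem_forall_notMem_of_countable
    ((isClosed_orthogonal N).inter (h.1.isClosed hP)) (((hSAc.image _).union hSBc).union
      (hSCc.image _)) (fun F hF => (hbad F hF).1) (fun F hF => (hbad F hF).2)
  refine ⟨x, hxE, fun M hM hNM hxM => ?_, fun M hM hMP hxM => ?_, fun C hC hCQ hTx => ?_⟩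
  · obtain ⟨A, hA, hAM⟩ := hAcof M hM hNM
    exact hx _ (.inl (.inl ⟨A, hA, rfl⟩)) (orthogonal_le hAM hxM)
  · obtain ⟨B, hB, hMB⟩ := hBcof M hM hMP
    exact hx B (.inl (.inr hB)) (hMB hxM)
  · obtain ⟨C', hC', hCC'⟩ := hCcof C hC hCQ
    exact hx _ (.inr ⟨C', hC', rfl⟩) (hCC' hTx)

end Nest

theorem stmt_14_general (𝓛 : Set (Submodule ℂ H)) (h𝓛 : IsContinuousNest 𝓛)
    (T : H →L[ℂ] H) (M₀ P : Submodule ℂ H) (hM₀ : M₀ ∈ 𝓛) (hP : P ∈ 𝓛)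
    (hlt : phiT 𝓛 T M₀ < P)
    (hmin : ∀ M ∈ 𝓛, phiT 𝓛 T M₀ < phiT 𝓛 T M → P ≤ phiT 𝓛 T M) :
    ∃ x : H, Mhat 𝓛 x = phiT 𝓛 T M₀ ∧ Mx 𝓛 x = P ∧
      Mx 𝓛 (T x) = sigmaT 𝓛 T (PsiT 𝓛 T M₀) := by
  have hnest := h𝓛.1
  have hN : phiT 𝓛 T M₀ ∈ 𝓛 := hnest.1.phiT_mem T M₀
  have hσ : sigmaT 𝓛 T M₀ ∈ 𝓛 := hnest.1.sigmaT_mem T M₀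
  obtain ⟨x, hxE, hxN, hxP, hTx⟩ := h𝓛.exists_generic_mem_orthogonal_inf hN hP hσ hlt
    fun C hC hCσ => hnest.not_orthogonal_inf_le_comap_of_lt_sigmaT hP hlt hC hCσ
  refine ⟨x, hnest.Mhat_eq hN hxE.1 hxN, hnest.Mx_eq hP hxE.2 hxP, ?_⟩
  rw [sigmaT_PsiT hnest.1 hM₀]
  exact hnest.Mx_eq hσ (le_comap_sigmaT h𝓛 hM₀ hmin hxE.2) hTx

theorem stmt_14 (𝓛 : Set (Submodule ℂ H)) (h𝓛 : IsContinuousNest 𝓛)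
    (T : H →L[ℂ] H) (hfin : FiniteDimensional ℂ (LinearMap.range (T : H →ₗ[ℂ] H)))
    (M₀ P : Submodule ℂ H) (hM₀ : M₀ ∈ 𝓛) (hP : P ∈ 𝓛)
    (hlt : phiT 𝓛 T M₀ < P)
    (hmin : ∀ M ∈ 𝓛, phiT 𝓛 T M₀ < phiT 𝓛 T M → P ≤ phiT 𝓛 T M) :
    ∃ x : H, Mhat 𝓛 x = phiT 𝓛 T M₀ ∧ Mx 𝓛 x = P ∧
      Mx 𝓛 (T x) = sigmaT 𝓛 T (PsiT 𝓛 T M₀) :=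
  stmt_14_general 𝓛 h𝓛 T M₀ P hM₀ hP hlt hmin
end

section
/- Let 𝓛 be a continuous nest on a complex separable Hilbert space H and let 𝓜 be a norm closed Lie 𝓣(𝓛)-module. If x, y ∈ H are nonzero and the rank-one operator x⊗y belongs to 𝓜, then for every a ∈ M_x and every b ∈ (M̂_y)^⊥ the operator a⊗b belongs to 𝓜 (that is, 𝓜 contains every rank-one operator in Q_{M_x} B(H) Q_{(M̂_y)^⊥}). -/
open scoped InnerProductSpace

variable {H : Type*} [NormedAddCommGroup H] [InnerProductSpace ℂ H]
  [CompleteSpace H] [TopologicalSpace.SeparableSpace H]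

/-!
By continuity of the nest, `M_x` is the closed span of the `N ∈ 𝓛` with `N < M_x`, and
`(M̂_y)ᗮ` is the closed span of the `Kᗮ` with `K ∈ 𝓛`, `M̂_y < K`. Since `𝓜` is closed and
`a ⊗ b` is continuous and (semi)linear in each variable, it suffices to treat `a ∈ N`, `b ∈ Kᗮ`.
Then `x ∉ N` and `K` is not orthogonal to `y`, so there are `s ∈ Nᗮ`, `p ∈ K` with
`⟪s, x⟫ = ⟪y, p⟫ = 1`; operators `p ⊗ s` with `p ∈ L`, `s ∈ Lᗮ` for some `L ∈ 𝓛` lie in the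
nest algebra. If `N ≤ M̂_y`, two commutators with `x ⊗ y` produce `a ⊗ b`. Otherwise `a ∈ K₂`
and `b ∈ K₁ᗮ` for some `M̂_y < K₁ < K₂ < M_x` in `𝓛`, and double commutators with
`T = p₁ ⊗ s₁ + p₂ ⊗ s₂` give `p₂ ⊗ s₁ ≡ ⟪s₁, p₂⟫ • Z (mod 𝓜)` for one fixed operator `Z`.
Continuity of the nest yields an orthonormal sequence `(eᵢ)` in `K₂ ⊓ K₁ᗮ`; averaging
`eᵢ ⊗ eᵢ ≡ Z` over `n` terms shows that `Z` is within `1 / n` of `𝓜`, so `Z ∈ 𝓜` and hence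
`p₂ ⊗ s₁ ∈ 𝓜`.
-/

open scoped ComplexInnerProductSpace
open Filter Topology

section Hilbert

variable {𝕜 E : Type*} [RCLike 𝕜] [NormedAddCommGroup E] [InnerProductSpace 𝕜 E]

theorem Orthonormal.norm_sum_rankOne_self_le_one {ι : Type*} {e : ι → E}
    (he : Orthonormal 𝕜 e) (s : Finset ι) :
    ‖∑ i ∈ s, InnerProductSpace.rankOne 𝕜 (e i) (e i)‖ ≤ 1 := by
  refine ContinuousLinearMap.opNorm_le_bound _ zero_le_one fun z => ?_
  have hsq : ‖∑ i ∈ s, inner 𝕜 (e i) z • e i‖ ^ 2 = ∑ i ∈ s, ‖inner 𝕜 (e i) z‖ ^ 2 := by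
    have := he.inner_sum (fun i => inner 𝕜 (e i) z) (fun i => inner 𝕜 (e i) z) s
    rw [inner_self_eq_norm_sq_to_K] at this
    simp only [RCLike.conj_mul] at this
    exact_mod_cast this
  rw [one_mul, sum_apply]
  simp only [InnerProductSpace.rankOne_apply]
  exact le_of_pow_le_pow_left₀ two_ne_zero (norm_nonneg z)
    (hsq ▸ he.sum_inner_products_le z)

theorem Submodule.exists_mem_orthogonal_norm_eq_one_of_lt [CompleteSpace E]
    {K L : Submodule 𝕜 E} (hK : IsClosed (K : Set E)) (hKL : K < L) :
    ∃ v ∈ L, v ∈ Kᗮ ∧ ‖v‖ = 1 := by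
  have := hK.completeSpace_coe
  have hne : Kᗮ ⊓ L ≠ ⊥ := fun h => hKL.ne <| by
    simpa [h] using Submodule.sup_orthogonal_inf_of_hasOrthogonalProjection hKL.le
  obtain ⟨v, ⟨hvK, hvL⟩, hv⟩ := Submodule.exists_mem_ne_zero_of_ne_bot hne
  exact ⟨(‖v‖⁻¹ : 𝕜) • v, L.smul_mem _ hvL, Kᗮ.smul_mem _ hvK, norm_smul_inv_norm hv⟩

theorem exists_orthonormal_of_strictMono [CompleteSpace E] {L : ℕ → Submodule 𝕜 E}
    (hL : StrictMono L) (hcl : ∀ n, IsClosed (L n : Set E)) :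
    ∃ e : ℕ → E, Orthonormal 𝕜 e ∧ ∀ n, e n ∈ L (n + 1) ∧ e n ∈ (L n)ᗮ := by
  choose e heL heK he1 using fun n =>
    Submodule.exists_mem_orthogonal_norm_eq_one_of_lt (hcl n) (hL n.lt_succ_self)
  have horth : ∀ {i j}, i < j → inner 𝕜 (e i) (e j) = 0 := fun hij =>
    (Submodule.mem_orthogonal _ _).1 (heK _) _ (hL.monotone hij (heL _))
  refine ⟨e, ⟨he1, fun i j hij => ?_⟩, fun n => ⟨heL n, heK n⟩⟩
  rcases hij.lt_or_gt with h | h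
  · exact horth h
  · exact inner_eq_zero_symm.1 (horth h)

theorem Submodule.orthogonal_sInf_le [CompleteSpace E] {S : Submodule 𝕜 E}
    (hS : IsClosed (S : Set E)) {𝒦 : Set (Submodule 𝕜 E)}
    (h𝒦 : ∀ K ∈ 𝒦, IsClosed (K : Set E)) (h : ∀ K ∈ 𝒦, Kᗮ ≤ S) : (sInf 𝒦)ᗮ ≤ S := by
  have := hS.completeSpace_coe
  have : Sᗮ ≤ sInf 𝒦 := le_sInf fun K hK => by
    have := (h𝒦 K hK).completeSpace_coe
    simpa using Submodule.orthogonal_le (h K hK)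
  simpa using Submodule.orthogonal_le this

end Hilbert

section Nest

variable {E : Type*} [NormedAddCommGroup E] [InnerProductSpace ℂ E] {𝓛 : Set (Submodule ℂ E)}

theorem IsContinuousNest.sInf_setOf_lt_eq (h𝓛 : IsContinuousNest 𝓛) {L : Submodule ℂ E}
    (hL : L ∈ 𝓛) : sInf {M ∈ 𝓛 | L < M} = L := by
  set F := sInf {M ∈ 𝓛 | L < M}
  have hF : F ∈ 𝓛 := h𝓛.1.1.2.2.2.1 _ fun M hM => hM.1
  refine le_antisymm ?_ (le_sInf fun M hM => hM.2.le)
  rw [h𝓛.2 F hF]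
  refine Submodule.topologicalClosure_minimal _ (sSup_le fun N hN => ?_) (h𝓛.1.1.1 L hL)
  rcases h𝓛.1.2 N hN.1 L hL with h | h
  · exact h
  · rcases h.lt_or_eq with h | h
    · exact absurd (sInf_le ⟨hN.1, h⟩ : F ≤ N) hN.2.not_ge
    · exact h.ge

theorem IsContinuousNest.exists_between (h𝓛 : IsContinuousNest 𝓛) {L C : Submodule ℂ E}
    (hL : L ∈ 𝓛) (hC : C ∈ 𝓛) (hLC : L < C) : ∃ M ∈ 𝓛, L < M ∧ M < C := by
  by_contra! h
  refine hLC.not_ge ((h𝓛.sInf_setOf_lt_eq hL).le.trans' (le_sInf fun M hM => ?_))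
  rcases h𝓛.1.2 M hM.1 C hC with hMC | hCM
  · exact ((hMC.lt_or_eq).resolve_left (h M hM.1 hM.2)).ge
  · exact hCM

theorem IsContinuousNest.exists_orthonormal [CompleteSpace E] (h𝓛 : IsContinuousNest 𝓛)
    {K₁ K₂ : Submodule ℂ E} (hK₁ : K₁ ∈ 𝓛) (hK₂ : K₂ ∈ 𝓛) (h12 : K₁ < K₂) :
    ∃ e : ℕ → E, Orthonormal ℂ e ∧ ∀ n, e n ∈ K₂ ∧ e n ∈ K₁ᗮ := by
  obtain ⟨L, hL, hL0, hL𝓛⟩ :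
      ∃ L : ℕ → Submodule ℂ E, StrictMono L ∧ L 0 = K₁ ∧ ∀ n, L n ∈ 𝓛 ∧ L n < K₂ := by
    have step (M : {M // M ∈ 𝓛 ∧ M < K₂}) : ∃ M' : {M // M ∈ 𝓛 ∧ M < K₂}, M.1 < M'.1 := by
      obtain ⟨M', hM', h1, h2⟩ := h𝓛.exists_between M.2.1 hK₂ M.2.2
      exact ⟨⟨M', hM', h2⟩, h1⟩
    choose next hnext using step
    refine ⟨fun n => (next^[n] ⟨K₁, hK₁, h12⟩).1, strictMono_nat_of_lt_succ fun n => ?_, rfl,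
      fun n => (next^[n] _).2⟩
    simpa only [Function.iterate_succ_apply'] using hnext _
  obtain ⟨e, he, heL⟩ := exists_orthonormal_of_strictMono hL fun n => h𝓛.1.1.1 _ (hL𝓛 n).1
  refine ⟨e, he, fun n => ⟨(hL𝓛 (n + 1)).2.le (heL n).1, ?_⟩⟩
  exact Submodule.orthogonal_le (hL0 ▸ hL.monotone n.zero_le) (heL n).2

theorem Mx_mem (h𝓛 : IsSubspaceLattice 𝓛) (x : E) : Mx 𝓛 x ∈ 𝓛 :=
  h𝓛.2.2.2.1 _ fun _ hM => hM.1

theorem Mx_le {K : Submodule ℂ E} (hK : K ∈ 𝓛) {x : E} (hx : x ∈ K) : Mx 𝓛 x ≤ K :=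
  sInf_le (s := {M ∈ 𝓛 | x ∈ M}) ⟨hK, hx⟩

theorem Mhat_mem (h𝓛 : IsSubspaceLattice 𝓛) (y : E) : Mhat 𝓛 y ∈ 𝓛 :=
  h𝓛.2.2.2.2 _ fun _ hM => hM.1

theorem le_Mhat {K : Submodule ℂ E} (hK : K ∈ 𝓛) {y : E} (hy : ∀ v ∈ K, ⟪y, v⟫ = 0) :
    K ≤ Mhat 𝓛 y :=
  (le_sSup (show K ∈ {M ∈ 𝓛 | ∀ v ∈ M, ⟪y, v⟫ = 0} from ⟨hK, hy⟩)).trans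
    (Submodule.le_topologicalClosure _)

theorem inner_eq_zero_of_mem_Mhat {y v : E} (hv : v ∈ Mhat 𝓛 y) : ⟪y, v⟫ = 0 := by
  have : Mhat 𝓛 y ≤ (innerSL ℂ y : E →ₗ[ℂ] ℂ).ker :=
    Submodule.topologicalClosure_minimal _
      (sSup_le fun _ hM u hu => LinearMap.mem_ker.2 (hM.2 u hu)) (innerSL ℂ y).isClosed_ker
  exact this hv

theorem Submodule.exists_inner_eq_one {K : Submodule ℂ E} {y : E}
    (h : ¬ ∀ v ∈ K, ⟪y, v⟫ = 0) : ∃ p ∈ K, ⟪y, p⟫ = 1 := by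
  obtain ⟨p, hp, hyp⟩ := not_forall₂.1 h
  exact ⟨⟪y, p⟫⁻¹ • p, K.smul_mem _ hp, by rw [inner_smul_right, inv_mul_cancel₀ hyp]⟩

theorem exists_mem_inner_eq_one_of_Mhat_lt {K : Submodule ℂ E} (hK : K ∈ 𝓛) {y : E}
    (h : Mhat 𝓛 y < K) : ∃ p ∈ K, ⟪y, p⟫ = 1 :=
  K.exists_inner_eq_one fun hy => h.not_ge (le_Mhat hK hy)

theorem exists_mem_orthogonal_inner_eq_one_of_lt_Mx [CompleteSpace E]
    (h𝓛 : IsSubspaceLattice 𝓛) {K : Submodule ℂ E} (hK : K ∈ 𝓛) {x : E} (h : K < Mx 𝓛 x) :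
    ∃ s ∈ Kᗮ, ⟪s, x⟫ = 1 := by
  have := (h𝓛.1 K hK).completeSpace_coe
  obtain ⟨s, hs, hxs⟩ := Submodule.exists_inner_eq_one (K := Kᗮ) fun hx =>
    h.not_ge (Mx_le hK (K.orthogonal_orthogonal ▸ (Kᗮ.mem_orthogonal' x).2 hx))
  exact ⟨s, hs, by rw [← inner_conj_symm, hxs, map_one]⟩

end Nest

section LieModule

variable {E : Type*} [NormedAddCommGroup E] [InnerProductSpace ℂ E]
  {𝓛 : Set (Submodule ℂ E)} {𝓜 : Submodule ℂ (E →L[ℂ] E)}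

theorem rankOne_apply (u v z : E) : rankOne u v z = ⟪v, z⟫ • u := rfl

theorem rankOne_comp_rankOne (u v p s : E) :
    rankOne u v ∘L rankOne p s = ⟪v, p⟫ • rankOne u s :=
  InnerProductSpace.rankOne_comp_rankOne u v p s

theorem rankOne_mem_nestAlg (h𝓛 : IsNest 𝓛) {K : Submodule ℂ E} (hK : K ∈ 𝓛) {p s : E}
    (hp : p ∈ K) (hs : s ∈ Kᗮ) : rankOne p s ∈ nestAlg 𝓛 := by
  intro M hM v hv
  rcases h𝓛.2 M hM K hK with h | h
  · rw [rankOne_apply, (K.mem_orthogonal' s).1 hs v (h hv), zero_smul]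
    exact M.zero_mem
  · exact M.smul_mem _ (h hp)

theorem mem_of_forall_rankOne_self_sub_mem (hclosed : IsClosed (𝓜 : Set (E →L[ℂ] E)))
    {e : ℕ → E} (he : Orthonormal ℂ e) {Z : E →L[ℂ] E} (h : ∀ i, rankOne (e i) (e i) - Z ∈ 𝓜) :
    Z ∈ 𝓜 := by
  set Q : ℕ → E →L[ℂ] E := fun n => ∑ i ∈ Finset.range n, rankOne (e i) (e i)
  have hmem (n : ℕ) : Z - ((n : ℂ) + 1)⁻¹ • Q (n + 1) ∈ 𝓜 := by
    have hsum : Q (n + 1) - ((n : ℂ) + 1) • Z ∈ 𝓜 := by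
      have := 𝓜.sum_mem fun i (_ : i ∈ Finset.range (n + 1)) => h i
      rwa [Finset.sum_sub_distrib, Finset.sum_const, Finset.card_range,
        ← Nat.cast_smul_eq_nsmul ℂ, Nat.cast_succ] at this
    convert 𝓜.smul_mem (-((n : ℂ) + 1)⁻¹) hsum using 1
    rw [smul_sub, smul_smul, neg_mul, inv_mul_cancel₀ (Nat.cast_add_one_ne_zero n)]
    module
  have hsmall : Tendsto (fun n : ℕ => ((n : ℂ) + 1)⁻¹ • Q (n + 1)) atTop (𝓝 0) := by
    refine squeeze_zero_norm (fun n => ?_) tendsto_one_div_add_atTop_nhds_zero_nat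
    rw [norm_smul, norm_inv, ← Nat.cast_succ, Complex.norm_natCast, one_div, Nat.cast_succ]
    exact mul_le_of_le_one_right (by positivity) (he.norm_sum_rankOne_self_le_one _)
  simpa using hclosed.mem_of_tendsto (tendsto_const_nhds.sub hsmall) (Eventually.of_forall hmem)

variable {x y : E}

theorem inner_mul_inner_smul_rankOne_mem (h𝓛 : IsNest 𝓛) (hLie : IsLieModule 𝓛 𝓜)
    (hxy : rankOne x y ∈ 𝓜) {K : Submodule ℂ E} (hK : K ∈ 𝓛) {p s : E} (hp : p ∈ K)
    (hs : s ∈ Kᗮ) : (⟪y, p⟫ * ⟪s, x⟫) • rankOne p s ∈ 𝓜 := by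
  have hT := rankOne_mem_nestAlg h𝓛 hK hp hs
  have hsp : ⟪s, p⟫ = 0 := (K.mem_orthogonal' s).1 hs p hp
  have h := hLie _ (hLie _ hxy _ hT) _ hT
  simp only [ContinuousLinearMap.sub_comp, ContinuousLinearMap.comp_sub, rankOne_comp_rankOne,
    ContinuousLinearMap.smul_comp, ContinuousLinearMap.comp_smul, hsp, zero_smul, smul_zero,
    sub_zero, zero_sub, smul_smul] at h
  rw [← 𝓜.smul_mem_iff (show (-2 : ℂ) ≠ 0 by norm_num)]
  convert h using 1
  module

theorem rankOne_sub_inner_smul_mem (h𝓛 : IsNest 𝓛) (hLie : IsLieModule 𝓛 𝓜)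
    (hxy : rankOne x y ∈ 𝓜) {K₁ K₂ : Submodule ℂ E} (hK₁ : K₁ ∈ 𝓛) (hK₂ : K₂ ∈ 𝓛)
    (h12 : K₁ ≤ K₂) {p₁ s₂ : E} (hp₁ : p₁ ∈ K₁) (hyp₁ : ⟪y, p₁⟫ = 1) (hs₂ : s₂ ∈ K₂ᗮ)
    (hs₂x : ⟪s₂, x⟫ = 1) {p₂ s₁ : E} (hp₂ : p₂ ∈ K₂) (hs₁ : s₁ ∈ K₁ᗮ) :
    rankOne p₂ s₁ - ⟪s₁, p₂⟫ • ((2⁻¹ : ℂ) • (rankOne x s₂ + rankOne p₁ y)) ∈ 𝓜 := by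
  have hs₂K₁ : s₂ ∈ K₁ᗮ := Submodule.orthogonal_le h12 hs₂
  have hp₁s₁ := inner_mul_inner_smul_rankOne_mem h𝓛 hLie hxy hK₁ hp₁ hs₁
  have hp₂s₂ := inner_mul_inner_smul_rankOne_mem h𝓛 hLie hxy hK₂ hp₂ hs₂
  have hp₁s₂ := inner_mul_inner_smul_rankOne_mem h𝓛 hLie hxy hK₂ (h12 hp₁) hs₂
  rw [hyp₁, one_mul] at hp₁s₁
  rw [hs₂x, mul_one] at hp₂s₂
  rw [hyp₁, hs₂x, one_mul, one_smul] at hp₁s₂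
  set T := rankOne p₁ s₁ + rankOne p₂ s₂
  have hT : T ∈ nestAlg 𝓛 := fun M hM v hv =>
    M.add_mem (rankOne_mem_nestAlg h𝓛 hK₁ hp₁ hs₁ M hM v hv)
      (rankOne_mem_nestAlg h𝓛 hK₂ hp₂ hs₂ M hM v hv)
  have h := hLie _ (hLie _ hxy _ hT) _ hT
  have o11 : ⟪s₁, p₁⟫ = 0 := (K₁.mem_orthogonal' s₁).1 hs₁ p₁ hp₁
  have o21 : ⟪s₂, p₁⟫ = 0 := (K₁.mem_orthogonal' s₂).1 hs₂K₁ p₁ hp₁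
  have o22 : ⟪s₂, p₂⟫ = 0 := (K₂.mem_orthogonal' s₂).1 hs₂ p₂ hp₂
  -- the `rankOne x s₂ + rankOne p₁ y` term comes from `T ∘L T = ⟪s₁, p₂⟫ • rankOne p₁ s₂`
  have key : rankOne p₂ s₁ - ⟪s₁, p₂⟫ • ((2⁻¹ : ℂ) • (rankOne x s₂ + rankOne p₁ y))
      = (-2⁻¹ : ℂ) • ((rankOne x y ∘L T - T ∘L rankOne x y) ∘L T
          - T ∘L (rankOne x y ∘L T - T ∘L rankOne x y))
        - ⟪s₁, x⟫ • rankOne p₁ s₁ - ⟪y, p₂⟫ • rankOne p₂ s₂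
        - (⟪s₁, x⟫ * ⟪y, p₂⟫) • rankOne p₁ s₂ := by
    simp only [T, ContinuousLinearMap.sub_comp, ContinuousLinearMap.comp_sub,
      ContinuousLinearMap.add_comp, ContinuousLinearMap.comp_add, ContinuousLinearMap.smul_comp,
      ContinuousLinearMap.comp_smul, rankOne_comp_rankOne, o11, o21, o22, hyp₁, hs₂x]
    module
  rw [key]
  exact 𝓜.sub_mem (𝓜.sub_mem (𝓜.sub_mem (𝓜.smul_mem _ h) hp₁s₁) hp₂s₂) (𝓜.smul_mem _ hp₁s₂)

end LieModule

section ContinuousNest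

variable {E : Type*} [NormedAddCommGroup E] [InnerProductSpace ℂ E] [CompleteSpace E]
  {𝓛 : Set (Submodule ℂ E)} {𝓜 : Submodule ℂ (E →L[ℂ] E)} {x y : E}

theorem rankOne_mem_of_lt (h𝓛 : IsContinuousNest 𝓛)
    (hclosed : IsClosed (𝓜 : Set (E →L[ℂ] E))) (hLie : IsLieModule 𝓛 𝓜)
    (hxy : rankOne x y ∈ 𝓜) {K₁ K₂ : Submodule ℂ E} (hK₁ : K₁ ∈ 𝓛)
    (hK₂ : K₂ ∈ 𝓛) (h12 : K₁ < K₂) {p₁ s₂ : E} (hp₁ : p₁ ∈ K₁) (hyp₁ : ⟪y, p₁⟫ = 1)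
    (hs₂ : s₂ ∈ K₂ᗮ) (hs₂x : ⟪s₂, x⟫ = 1) {p s : E} (hp : p ∈ K₂) (hs : s ∈ K₁ᗮ) :
    rankOne p s ∈ 𝓜 := by
  have hcong {p s : E} (hp : p ∈ K₂) (hs : s ∈ K₁ᗮ) :=
    rankOne_sub_inner_smul_mem h𝓛.1 hLie hxy hK₁ hK₂ h12.le hp₁ hyp₁ hs₂ hs₂x hp hs
  obtain ⟨e, he, heK⟩ := h𝓛.exists_orthonormal hK₁ hK₂ h12
  have hZ := mem_of_forall_rankOne_self_sub_mem hclosed he fun i => by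
    simpa [inner_self_eq_norm_sq_to_K, he.1 i] using hcong (heK i).1 (heK i).2
  simpa using 𝓜.add_mem (hcong hp hs) (𝓜.smul_mem ⟪s, p⟫ hZ)

theorem rankOne_mem_of_lt_Mx_of_Mhat_lt (h𝓛 : IsContinuousNest 𝓛)
    (hclosed : IsClosed (𝓜 : Set (E →L[ℂ] E))) (hLie : IsLieModule 𝓛 𝓜)
    (hxy : rankOne x y ∈ 𝓜) {N K : Submodule ℂ E} (hN : N ∈ 𝓛) (hNx : N < Mx 𝓛 x)
    (hK : K ∈ 𝓛) (hyK : Mhat 𝓛 y < K) {a b : E} (ha : a ∈ N) (hb : b ∈ Kᗮ) :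
    rankOne a b ∈ 𝓜 := by
  have hlat := h𝓛.1.1
  by_cases hNy : N ≤ Mhat 𝓛 y
  · -- `a ⊗ y = -[x ⊗ y, a ⊗ s]` and then `a ⊗ b = [a ⊗ y, p ⊗ b]`
    obtain ⟨s, hs, hsx⟩ := exists_mem_orthogonal_inner_eq_one_of_lt_Mx hlat hN hNx
    obtain ⟨p, hp, hyp⟩ := exists_mem_inner_eq_one_of_Mhat_lt hK hyK
    have hay : rankOne a y ∈ 𝓜 := by
      have := hLie _ hxy _ (rankOne_mem_nestAlg h𝓛.1 hN ha hs)
      rwa [rankOne_comp_rankOne, rankOne_comp_rankOne, inner_eq_zero_of_mem_Mhat (hNy ha), hsx,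
        zero_smul, one_smul, zero_sub, neg_mem_iff] at this
    have := hLie _ hay _ (rankOne_mem_nestAlg h𝓛.1 hK hp hb)
    rwa [rankOne_comp_rankOne, rankOne_comp_rankOne, hyp,
      (K.mem_orthogonal' b).1 hb a (hyK.le (hNy ha)), one_smul, zero_smul, sub_zero] at this
  · have hyN : Mhat 𝓛 y < N :=
      ((h𝓛.1.2 N hN _ (Mhat_mem hlat y)).resolve_left hNy).lt_of_not_ge hNy
    obtain ⟨K₁, hK₁, hyK₁, hK₁N, hK₁K⟩ : ∃ K₁ ∈ 𝓛, Mhat 𝓛 y < K₁ ∧ K₁ ≤ N ∧ K₁ ≤ K := by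
      rcases h𝓛.1.2 N hN K hK with h | h
      · exact ⟨N, hN, hyN, le_rfl, h⟩
      · exact ⟨K, hK, hyK, h, le_rfl⟩
    obtain ⟨K₂, hK₂, hNK₂, hK₂x⟩ := h𝓛.exists_between hN (Mx_mem hlat x) hNx
    obtain ⟨p₁, hp₁, hyp₁⟩ := exists_mem_inner_eq_one_of_Mhat_lt hK₁ hyK₁
    obtain ⟨s₂, hs₂, hs₂x⟩ := exists_mem_orthogonal_inner_eq_one_of_lt_Mx hlat hK₂ hK₂x
    exact rankOne_mem_of_lt h𝓛 hclosed hLie hxy hK₁ hK₂ (hK₁N.trans_lt hNK₂) hp₁ hyp₁ hs₂ hs₂x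
      (hNK₂.le ha) (Submodule.orthogonal_le hK₁K hb)

end ContinuousNest

theorem stmt_17_general (𝓛 : Set (Submodule ℂ H)) (h𝓛 : IsContinuousNest 𝓛)
    (𝓜 : Submodule ℂ (H →L[ℂ] H)) (hclosed : IsClosed (𝓜 : Set (H →L[ℂ] H)))
    (hLie : IsLieModule 𝓛 𝓜)
    (x y : H) (hxy : rankOne x y ∈ 𝓜) :
    ∀ a ∈ Mx 𝓛 x, ∀ b ∈ (Mhat 𝓛 y)ᗮ, rankOne a b ∈ 𝓜 := by
  have hlat := h𝓛.1.1
  have hleft {K : Submodule ℂ H} (hK : K ∈ 𝓛) (hyK : Mhat 𝓛 y < K) {b : H} (hb : b ∈ Kᗮ) :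
      Mx 𝓛 x ≤ 𝓜.comap (ContinuousLinearMap.smulRightL ℂ H H (innerSL ℂ b)).toLinearMap := by
    rw [h𝓛.2 _ (Mx_mem hlat x)]
    exact Submodule.topologicalClosure_minimal _ (sSup_le fun N hN a ha =>
        rankOne_mem_of_lt_Mx_of_Mhat_lt h𝓛 hclosed hLie hxy hN.1 hN.2 hK hyK ha hb)
      (hclosed.preimage (ContinuousLinearMap.smulRightL ℂ H H (innerSL ℂ b)).continuous)
  intro a ha b hb
  rw [← h𝓛.sInf_setOf_lt_eq (Mhat_mem hlat y)] at hb
  exact Submodule.orthogonal_sInf_le (S := 𝓜.comap (InnerProductSpace.rankOne ℂ a).toLinearMap)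
    (hclosed.preimage (InnerProductSpace.rankOne ℂ a).continuous) (fun K hK => hlat.1 K hK.1)
    (fun K hK b hb => hleft hK.1 hK.2 hb ha) hb

theorem stmt_17 (𝓛 : Set (Submodule ℂ H)) (h𝓛 : IsContinuousNest 𝓛)
    (𝓜 : Submodule ℂ (H →L[ℂ] H)) (hclosed : IsClosed (𝓜 : Set (H →L[ℂ] H)))
    (hLie : IsLieModule 𝓛 𝓜)
    (x y : H) (hx : x ≠ 0) (hy : y ≠ 0) (hxy : rankOne x y ∈ 𝓜) :
    ∀ a ∈ Mx 𝓛 x, ∀ b ∈ (Mhat 𝓛 y)ᗮ, rankOne a b ∈ 𝓜 :=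
  stmt_17_general 𝓛 h𝓛 𝓜 hclosed hLie x y hxy
end
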